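/- arXiv:1204.1765 — 4 statements merged into one kernel-verified Lean document; each statement's English description precedes it below -/
import Mathlib

section
/- Let n ≥ 1. Consider the set of pairs (z, w) where z = (z₁,…,zₙ) ∈ ℂⁿ has pairwise distinct entries and w ∈ ℂ \ {0}, and let the complex affine group {t ↦ a·t + b : a ∈ ℂ \ {0}, b ∈ ℂ} act by (a,b)·(z, w) = ((a·z₁ + b, …, a·zₙ + b), w/a). Then the quotient of this set by the affine group action is in bijection with the quotient of the configuration space Confₙ(ℂ) = {z ∈ ℂⁿ : zᵢ pairwise distinct} by the action of (ℂ, +) by simultaneous translation; explicitly, the assignment sending the orbit of (z, w) to the translation class of (w·z₁, …, w·zₙ) is well defined and bijective. -/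
/-- A scaled `n`-marked affine line: an `n`-tuple `z` of pairwise distinct points of `ℂ`
together with a nonzero scaling parameter `w` (the scaling one-form is `w dz`). -/
def ScaledLine (n : ℕ) : Type :=
  {p : (Fin n → ℂ) × ℂ // Function.Injective p.1 ∧ p.2 ≠ 0}

/-- Orbit relation for the action of the complex affine group
`(a, b) · (z, w) = ((a·z₁ + b, …, a·zₙ + b), w / a)` (`a ≠ 0`). -/
def scaledRel (n : ℕ) (p q : ScaledLine n) : Prop :=
  ∃ a b : ℂ, a ≠ 0 ∧ (∀ i, q.1.1 i = a * p.1.1 i + b) ∧ q.1.2 = p.1.2 / a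

/-- A point of the configuration space `Confₙ(ℂ)`: an `n`-tuple of pairwise distinct
points of `ℂ`. -/
def ConfigPt (n : ℕ) : Type := {z : Fin n → ℂ // Function.Injective z}

/-- The relation of differing by a simultaneous translation by some `b ∈ ℂ`. -/
def transRel (n : ℕ) (z w : ConfigPt n) : Prop :=
  ∃ b : ℂ, ∀ i, w.1 i = z.1 i + b

/-!
Acting by `t ↦ w·t` normalizes the scaling of `(z, w)` to `1` and turns `z` into `w·z`; the
affine maps preserving the scaling `1` are exactly the translations. Hence the orbit of `(z, w)`
is determined by the translation class of `w·z`, and every configuration arises with `w = 1`.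
-/

def ScaledLine.toConfigPt {n : ℕ} (p : ScaledLine n) : ConfigPt n :=
  ⟨fun i => p.1.2 * p.1.1 i, fun _ _ h => p.2.1 (mul_left_cancel₀ p.2.2 h)⟩

def ConfigPt.toScaledLine {n : ℕ} (z : ConfigPt n) : ScaledLine n :=
  ⟨(z.1, 1), z.2, one_ne_zero⟩

namespace ScaledLine

variable {n : ℕ}

theorem transRel_toConfigPt_of_scaledRel {p q : ScaledLine n} (h : scaledRel n p q) :
    transRel n p.toConfigPt q.toConfigPt := by
  obtain ⟨a, b, ha, hz, hw⟩ := h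
  refine ⟨p.1.2 / a * b, fun i => ?_⟩
  simp only [toConfigPt, hw, hz i]
  field_simp

theorem scaledRel_toScaledLine_toConfigPt (p : ScaledLine n) :
    scaledRel n p p.toConfigPt.toScaledLine :=
  ⟨p.1.2, 0, p.2.2, fun _ => (add_zero _).symm, (div_self p.2.2).symm⟩

end ScaledLine

namespace ConfigPt

variable {n : ℕ}

theorem scaledRel_toScaledLine_of_transRel {z w : ConfigPt n} (h : transRel n z w) :
    scaledRel n z.toScaledLine w.toScaledLine := by
  obtain ⟨b, hb⟩ := h
  exact ⟨1, b, one_ne_zero, fun i => by simp [toScaledLine, hb i], by simp [toScaledLine]⟩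

theorem toScaledLine_toConfigPt (z : ConfigPt n) : z.toScaledLine.toConfigPt = z :=
  Subtype.ext <| funext fun _ => one_mul _

end ConfigPt

def moduliEquivConfigModTranslation (n : ℕ) : Quot (scaledRel n) ≃ Quot (transRel n) where
  toFun := Quot.lift (fun p => Quot.mk _ p.toConfigPt)
    fun _ _ h => Quot.sound (ScaledLine.transRel_toConfigPt_of_scaledRel h)
  invFun := Quot.lift (fun z => Quot.mk _ z.toScaledLine)
    fun _ _ h => Quot.sound (ConfigPt.scaledRel_toScaledLine_of_transRel h)
  left_inv := Quot.ind fun p => (Quot.sound (ScaledLine.scaledRel_toScaledLine_toConfigPt p)).symm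
  right_inv := Quot.ind fun z => congrArg (Quot.mk _) z.toScaledLine_toConfigPt

theorem moduli_scaled_lines_equiv_config_mod_translation_general (n : ℕ) :
    ∃ F : Quot (scaledRel n) ≃ Quot (transRel n),
      ∀ p : ScaledLine n,
        F (Quot.mk _ p) =
          Quot.mk _ (⟨fun i => p.1.2 * p.1.1 i,
            fun i j h => p.2.1 (mul_left_cancel₀ p.2.2 h)⟩ : ConfigPt n) :=
  ⟨moduliEquivConfigModTranslation n, fun _ => rfl⟩

/-- The moduli set `M_{n,1}(𝔸)` of scaled `n`-marked affine lines (pairs `(z, w)` modulo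
the complex affine group) is in bijection with the configuration space `Confₙ(ℂ)` modulo
translation, via the assignment sending the orbit of `(z, w)` to the translation class of
`(w·z₁, …, w·zₙ)`. -/
theorem moduli_scaled_lines_equiv_config_mod_translation (n : ℕ) (hn : 1 ≤ n) :
    ∃ F : Quot (scaledRel n) ≃ Quot (transRel n),
      ∀ p : ScaledLine n,
        F (Quot.mk _ p) =
          Quot.mk _ (⟨fun i => p.1.2 * p.1.1 i,
            fun i j h => p.2.1 (mul_left_cancel₀ p.2.2 h)⟩ : ConfigPt n) :=
  moduli_scaled_lines_equiv_config_mod_translation_general n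
end

section
/- Let T be a finite tree with edge set E and a distinguished root vertex r, and let S be a nonempty set of vertices of T which is an antichain with respect to the root, i.e. no element of S lies (as a vertex) strictly on the path from r to another element of S. Then the set of labellings γ : E → ℂˣ that are balanced with respect to S is a subgroup of the group (ℂˣ)^E (under pointwise multiplication) which is isomorphic, as an abelian group, to (ℂˣ)^{#E − #S + 1}. -/
/-!
A labelling is balanced with respect to `S` iff the products `∏_{e ∈ P_v} γ e`, `v ∈ S`, all
agree with the one at a base vertex `v₀ ∈ S`, taken to be the root when the root lies in `S`.
For every other `w ∈ S` the last edge of the path from `r` to `w` lies on no other path to a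
vertex of `S`, by the antichain condition. The equation for `w` therefore determines `γ` on that
edge from the values of `γ` on edges outside these `#S - 1` last edges, and restricting
balanced labellings to the remaining `#E - #S + 1` edges is an isomorphism.
-/

open Finset

section BalancedSubgroup

variable {ι E M : Type*} [CommGroup M]

def balancedSubgroup (P : ι → Finset E) (S : Finset ι) : Subgroup (E → M) where
  carrier := {γ | ∀ v ∈ S, ∀ w ∈ S, ∏ e ∈ P v, γ e = ∏ e ∈ P w, γ e}
  one_mem' _ _ _ _ := by simp only [Pi.one_apply, prod_const_one]
  mul_mem' ha hb v hv w hw := by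
    simp only [Pi.mul_apply, prod_mul_distrib, ha v hv w hw, hb v hv w hw]
  inv_mem' ha v hv w hw := by
    simp only [Pi.inv_apply, prod_inv_distrib, ha v hv w hw]

variable {P : ι → Finset E} {S : Finset ι} {γ : E → M}

theorem mem_balancedSubgroup :
    γ ∈ balancedSubgroup P S ↔ ∀ v ∈ S, ∀ w ∈ S, ∏ e ∈ P v, γ e = ∏ e ∈ P w, γ e :=
  Iff.rfl

theorem mem_balancedSubgroup_iff_eq_base [DecidableEq ι] {v₀ : ι} (hv₀ : v₀ ∈ S) :
    γ ∈ balancedSubgroup P S ↔ ∀ w ∈ S.erase v₀, ∏ e ∈ P w, γ e = ∏ e ∈ P v₀, γ e := by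
  refine ⟨fun h w hw => h w (mem_of_mem_erase hw) v₀ hv₀, fun h => ?_⟩
  have h' : ∀ u ∈ S, ∏ e ∈ P u, γ e = ∏ e ∈ P v₀, γ e := fun u hu => by
    by_cases hu₀ : u = v₀
    · rw [hu₀]
    · exact h u (mem_erase.2 ⟨hu₀, hu⟩)
  intro v hv w hw
  rw [h' v hv, h' w hw]

end BalancedSubgroup

def restrictCompl {E M : Type*} [MulOneClass M] (D : Finset E) :
    (E → M) →* ({e // e ∉ D} → M) :=
  MonoidHom.pi fun e => Pi.evalMonoidHom (fun _ => M) e.1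

@[simp]
theorem restrictCompl_apply {E M : Type*} [MulOneClass M] (D : Finset E) (γ : E → M)
    (e : {e // e ∉ D}) : restrictCompl D γ e = γ e :=
  rfl

section PrivateSelection

variable {ι E M : Type*} [DecidableEq ι] [CommGroup M]
  {P : ι → Finset E} {S : Finset ι} {v₀ : ι} {d : S.erase v₀ → E}

structure IsPrivateSelection (P : ι → Finset E) (S : Finset ι) (v₀ : ι) (d : S.erase v₀ → E) :
    Prop where
  base_mem : v₀ ∈ S
  mem : ∀ w : S.erase v₀, d w ∈ P w
  eq_of_mem : ∀ w : S.erase v₀, ∀ v ∈ S, d w ∈ P v → v = w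

namespace IsPrivateSelection

theorem injective (hd : IsPrivateSelection P S v₀ d) : Function.Injective d := fun w w' h =>
  Subtype.ext (hd.eq_of_mem w' w (mem_of_mem_erase w.2) (h ▸ hd.mem w))

variable [DecidableEq E] {γ : E → M}

theorem inter_image_eq_empty (hd : IsPrivateSelection P S v₀ d) :
    P v₀ ∩ univ.image d = ∅ := by
  refine eq_empty_of_forall_notMem fun e he => ?_
  obtain ⟨he, w, -, rfl⟩ := mem_inter.1 he |>.imp_right mem_image.1
  exact ne_of_mem_erase w.2 (hd.eq_of_mem w v₀ hd.base_mem he).symm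

theorem inter_image_eq_singleton (hd : IsPrivateSelection P S v₀ d) (w : S.erase v₀) :
    P w ∩ univ.image d = {d w} := by
  ext e
  simp only [mem_inter, mem_image, mem_univ, true_and, mem_singleton]
  constructor
  · rintro ⟨he, w', rfl⟩
    rw [Subtype.ext (hd.eq_of_mem w' w (mem_of_mem_erase w.2) he)]
  · rintro rfl
    exact ⟨hd.mem w, w, rfl⟩

theorem prod_base_eq_prod_sdiff (hd : IsPrivateSelection P S v₀ d) :
    ∏ e ∈ P v₀, γ e = ∏ e ∈ P v₀ \ univ.image d, γ e := by
  rw [← prod_inter_mul_prod_sdiff (P v₀) (univ.image d), hd.inter_image_eq_empty,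
    prod_empty, one_mul]

theorem prod_eq_mul_prod_sdiff (hd : IsPrivateSelection P S v₀ d) (w : S.erase v₀) :
    ∏ e ∈ P w, γ e = γ (d w) * ∏ e ∈ P w \ univ.image d, γ e := by
  rw [← prod_inter_mul_prod_sdiff (P w) (univ.image d), hd.inter_image_eq_singleton,
    prod_singleton]

theorem mem_balancedSubgroup_iff (hd : IsPrivateSelection P S v₀ d) :
    γ ∈ balancedSubgroup P S ↔ ∀ w : S.erase v₀,
      γ (d w) = (∏ e ∈ P v₀ \ univ.image d, γ e) / ∏ e ∈ P w \ univ.image d, γ e := by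
  rw [mem_balancedSubgroup_iff_eq_base hd.base_mem, Subtype.forall]
  refine forall₂_congr fun w hw => ?_
  rw [hd.prod_eq_mul_prod_sdiff ⟨w, hw⟩, hd.prod_base_eq_prod_sdiff, eq_div_iff_mul_eq']

theorem injective_restrictCompl (hd : IsPrivateSelection P S v₀ d) :
    Function.Injective
      ((restrictCompl (M := M) (univ.image d)).comp (balancedSubgroup P S).subtype) := by
  intro γ γ' h
  have hoff (e : E) (he : e ∉ univ.image d) : γ.1 e = γ'.1 e := congrFun h ⟨e, he⟩
  have hprod (v : ι) : ∏ e ∈ P v \ univ.image d, γ.1 e = ∏ e ∈ P v \ univ.image d, γ'.1 e :=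
    prod_congr rfl fun e he => hoff e (mem_sdiff.1 he).2
  ext e
  by_cases he : e ∈ univ.image d
  · obtain ⟨w, -, rfl⟩ := mem_image.1 he
    rw [hd.mem_balancedSubgroup_iff.1 γ.2 w, hd.mem_balancedSubgroup_iff.1 γ'.2 w,
      hprod, hprod]
  · exact hoff e he

theorem surjective_restrictCompl (hd : IsPrivateSelection P S v₀ d) :
    Function.Surjective
      ((restrictCompl (M := M) (univ.image d)).comp (balancedSubgroup P S).subtype) := by
  intro δ
  set δ' : E → M := Function.extend Subtype.val δ 1
  set γ : E → M := Function.extend d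
    (fun w => (∏ e ∈ P v₀ \ univ.image d, δ' e) / ∏ e ∈ P w \ univ.image d, δ' e) δ'
  have hoff (e : E) (he : e ∉ univ.image d) : γ e = δ' e :=
    Function.extend_apply' _ _ _ (by simpa using he)
  have hprod (v : ι) : ∏ e ∈ P v \ univ.image d, γ e = ∏ e ∈ P v \ univ.image d, δ' e :=
    prod_congr rfl fun e he => hoff e (mem_sdiff.1 he).2
  refine ⟨⟨γ, hd.mem_balancedSubgroup_iff.2 fun w => ?_⟩, funext fun e => ?_⟩
  · rw [hprod, hprod]
    exact hd.injective.extend_apply _ _ w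
  · simp only [MonoidHom.coe_comp, Function.comp_apply, Subgroup.coe_subtype,
      restrictCompl_apply]
    rw [hoff e e.2]
    exact Subtype.val_injective.extend_apply _ _ e

noncomputable def balancedSubgroupEquiv (hd : IsPrivateSelection P S v₀ d) :
    balancedSubgroup (M := M) P S ≃* ({e // e ∉ univ.image d} → M) :=
  MulEquiv.ofBijective _ ⟨hd.injective_restrictCompl, hd.surjective_restrictCompl⟩

theorem card_compl_image [Fintype E] (hd : IsPrivateSelection P S v₀ d) :
    Fintype.card {e // e ∉ univ.image d} = Fintype.card E + 1 - S.card := by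
  have hcard : (univ.image d).card = S.card - 1 := by
    rw [card_image_of_injective _ hd.injective, card_univ, Fintype.card_coe,
      card_erase_of_mem hd.base_mem]
  have hle : (univ.image d).card ≤ Fintype.card E := card_le_univ _
  have hpos : 0 < S.card := card_pos.2 ⟨v₀, hd.base_mem⟩
  rw [Fintype.card_subtype_compl, Fintype.card_coe]
  omega

end IsPrivateSelection

theorem nonempty_balancedSubgroup_mulEquiv [Fintype E] (hv₀ : v₀ ∈ S)
    (hpriv : ∀ w ∈ S.erase v₀, ∃ e ∈ P w, ∀ v ∈ S, e ∈ P v → v = w) :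
    Nonempty (balancedSubgroup (M := M) P S ≃* (Fin (Fintype.card E + 1 - S.card) → M)) := by
  classical
  choose d hmem heq using fun w : S.erase v₀ => hpriv w w.2
  have hd : IsPrivateSelection P S v₀ d := ⟨hv₀, hmem, heq⟩
  exact ⟨hd.balancedSubgroupEquiv.trans <|
    MulEquiv.arrowCongr (Fintype.equivFinOfCardEq hd.card_compl_image) (MulEquiv.refl M)⟩

end PrivateSelection

theorem SimpleGraph.eq_of_mk_mem_edges_of_antichain {V : Type*} {G : SimpleGraph V} {r : V}
    {path : ∀ v : V, G.Walk r v} {S : Finset V}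
    (hanti : ∀ v ∈ S, ∀ w ∈ S, v ≠ w → ¬(v ∈ (path w).support ∧ v ≠ r))
    {v w x : V} (hv : v ∈ S) (hw : w ∈ S) (hwr : w ≠ r) (h : s(x, w) ∈ (path v).edges) :
    v = w :=
  by_contra fun hvw => hanti w hw v hv (Ne.symm hvw) ⟨(path v).snd_mem_support_of_mem_edges h, hwr⟩

theorem balanced_labellings_subgroup_iso_general {V : Type*} [Fintype V] [DecidableEq V]
    (G : SimpleGraph V) [DecidableRel G.Adj] (r : V)
    (path : ∀ v : V, G.Walk r v)
    (S : Finset V) (hS : S.Nonempty)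
    (hanti : ∀ v ∈ S, ∀ w ∈ S, v ≠ w → ¬(v ∈ (path w).support ∧ v ≠ r)) :
    ∃ H : Subgroup (↥G.edgeSet → ℂˣ),
      (H : Set (↥G.edgeSet → ℂˣ)) =
        {γ | ∀ v ∈ S, ∀ w ∈ S,
          (∏ e ∈ univ.filter (fun e : G.edgeSet =>
              (e : Sym2 V) ∈ (path v).edges ∧ (e : Sym2 V) ∉ (path w).edges), γ e) *
          (∏ e ∈ univ.filter (fun e : G.edgeSet =>
              (e : Sym2 V) ∈ (path w).edges ∧ (e : Sym2 V) ∉ (path v).edges), γ e)⁻¹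
            = 1} ∧
      Nonempty (H ≃* (Fin (Fintype.card G.edgeSet + 1 - S.card) → ℂˣ)) := by
  let P : V → Finset G.edgeSet := fun v => univ.filter fun e => (e : Sym2 V) ∈ (path v).edges
  refine ⟨balancedSubgroup P S, ?_, ?_⟩
  · ext γ
    simp only [SetLike.mem_coe, mem_balancedSubgroup, Set.mem_ofPred_eq, P, filter_and_not,
      ← div_eq_mul_inv, prod_sdiff_div_prod_sdiff, div_eq_one]
  -- The root has no last edge, so it must be the base vertex when it lies in `S`.
  obtain ⟨v₀, hv₀, hr⟩ : ∃ v₀ ∈ S, ∀ w ∈ S.erase v₀, w ≠ r := by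
    by_cases hrS : r ∈ S
    · exact ⟨r, hrS, fun w hw => ne_of_mem_erase hw⟩
    · obtain ⟨v, hv⟩ := hS
      exact ⟨v, hv, fun w hw hwr => hrS (hwr ▸ mem_of_mem_erase hw)⟩
  refine nonempty_balancedSubgroup_mulEquiv hv₀ fun w hw => ?_
  have hlast := (path w).mk_penultimate_end_mem_edges
    (SimpleGraph.Walk.not_nil_of_ne (hr w hw).symm)
  refine ⟨⟨_, (path w).edges_subset_edgeSet hlast⟩, by simpa [P] using hlast, fun v hv hev => ?_⟩
  exact SimpleGraph.eq_of_mk_mem_edges_of_antichain hanti hv (mem_of_mem_erase hw) (hr w hw)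
    (by simpa [P] using hev)

/-- Let `G` be a finite tree with edge set `E` and root `r`, and for each vertex `v` let
`path v` be the unique non-self-crossing path from `r` to `v` (with edge set `P_{rv}`).
Let `S` be a nonempty finite set of vertices which is an antichain with respect to the
root: no element of `S` lies (as a vertex) strictly on the path from `r` to another
element of `S`.  Then the set of labellings `γ : E → ℂˣ` that are balanced with respect
to `S` (i.e. `(∏_{e ∈ P_{rv} \ P_{rw}} γ e) · (∏_{e ∈ P_{rw} \ P_{rv}} γ e)⁻¹ = 1` for
all `v, w ∈ S`) is a subgroup of `(ℂˣ)^E` isomorphic, as an abelian group, to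
`(ℂˣ)^(#E - #S + 1)`. -/
theorem balanced_labellings_subgroup_iso {V : Type*} [Fintype V] [DecidableEq V]
    (G : SimpleGraph V) [DecidableRel G.Adj] (hG : G.IsTree) (r : V)
    (path : ∀ v : V, G.Walk r v) (hpath : ∀ v, (path v).IsPath)
    (S : Finset V) (hS : S.Nonempty)
    (hanti : ∀ v ∈ S, ∀ w ∈ S, v ≠ w → ¬(v ∈ (path w).support ∧ v ≠ r)) :
    ∃ H : Subgroup (↥G.edgeSet → ℂˣ),
      (H : Set (↥G.edgeSet → ℂˣ)) =
        {γ | ∀ v ∈ S, ∀ w ∈ S,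
          (∏ e ∈ univ.filter (fun e : G.edgeSet =>
              (e : Sym2 V) ∈ (path v).edges ∧ (e : Sym2 V) ∉ (path w).edges), γ e) *
          (∏ e ∈ univ.filter (fun e : G.edgeSet =>
              (e : Sym2 V) ∈ (path w).edges ∧ (e : Sym2 V) ∉ (path v).edges), γ e)⁻¹
            = 1} ∧
      Nonempty (H ≃* (Fin (Fintype.card G.edgeSet + 1 - S.card) → ℂˣ)) :=
  balanced_labellings_subgroup_iso_general G r path S hS hanti
end

section
/- Let n ≥ 0. The stable colored trees Γ with n inputs satisfying #Edge_{<∞}(Γ) + 1 − #Vert¹(Γ) = 1 are, up to isomorphism of colored trees preserving the labelling of semi-infinite edges, exactly the following: (a) for each subset I ⊆ {1,…,n} with |I| ≥ 2, the tree with two vertices joined by one finite edge, one vertex lying in Vert⁰(Γ) and carrying the inputs labelled by I, the other lying in Vert¹(Γ) and carrying the root edge and the inputs labelled by {1,…,n} \ I; and (b) for each unordered partition of {1,…,n} into r ≥ 2 nonempty parts I₁,…,I_r, the tree with one vertex in Vert^∞(Γ) carrying the root edge, joined by finite edges to r vertices in Vert¹(Γ), the j-th of which carries the inputs labelled by I_j.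 -/
/-!
A tree has one more vertex than edges, so the codimension `#Edge + 1 - #Vert¹` is the number of
uncolored vertices, and codimension one means there is a unique uncolored vertex `w`. By
monotonicity every path from an input to the root then reads `c`, `w c` or `c w` with `c`
colored. Since the degrees of a finite tree sum to `2 #V - 2`, stability leaves no room for
vertices without marks: if every input sits at the root vertex or at a neighbour of it, every
other vertex is a leaf next to the root carrying an input. For `w ∈ Vert⁰` this yields the
two-vertex trees (a); for `w ∈ Vert^∞` it forces `w` to carry the root and yields the stars (b).
-/

open Finset

/-- A colored tree with `n` inputs: a finite tree `G` on vertex set `V`, together with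
`n + 1` semi-infinite edges attached at the vertices `mark 0, mark 1, …, mark n`
(the edge labelled `0` is the root edge, those labelled `1, …, n` are the inputs) and a
partition of the vertices `Vert(Γ) = Vert⁰ ∪ Vert¹ ∪ Vert^∞` recorded by
`color : V → Fin 3` (`0 ↦ Vert⁰`, `1 ↦ Vert¹` (colored), `2 ↦ Vert^∞`), satisfying
monotonicity: on the unique non-self-crossing path from the vertex carrying any input to
the vertex carrying the root edge there is exactly one colored vertex, all vertices
strictly before it lie in `Vert⁰`, and all vertices strictly after it lie in `Vert^∞`. -/
structure ColoredTree (n : ℕ) where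
  /-- the vertex set -/
  V : Type
  fintypeV : Fintype V
  decEqV : DecidableEq V
  /-- the underlying graph; its edges are the finite edges `Edge_{<∞}(Γ)` -/
  G : SimpleGraph V
  decAdj : DecidableRel G.Adj
  isTree : G.IsTree
  /-- `mark i` is the vertex carrying the semi-infinite edge labelled `i` -/
  mark : Fin (n + 1) → V
  /-- the coloring: `0 ↦ Vert⁰`, `1 ↦ Vert¹`, `2 ↦ Vert^∞` -/
  color : V → Fin 3
  mono : ∀ i : Fin n, ∀ p : G.Walk (mark i.succ) (mark 0), p.IsPath →
    ∃ (l₀ l₂ : List V) (c : V),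
      p.support = l₀ ++ c :: l₂ ∧ color c = 1 ∧
        (∀ x ∈ l₀, color x = 0) ∧ (∀ x ∈ l₂, color x = 2)

attribute [instance] ColoredTree.fintypeV ColoredTree.decEqV ColoredTree.decAdj

/-- The valence of a vertex: its degree in the tree (number of incident finite edges)
plus the number of semi-infinite edges attached to it. -/
def ColoredTree.valence {n : ℕ} (T : ColoredTree n) (v : T.V) : ℕ :=
  T.G.degree v + (Finset.univ.filter fun i : Fin (n + 1) => T.mark i = v).card

/-- A colored tree is stable if every vertex in `Vert⁰ ∪ Vert^∞` has valence at least 3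
and every colored vertex has valence at least 2. -/
def ColoredTree.IsStable {n : ℕ} (T : ColoredTree n) : Prop :=
  ∀ v : T.V, (T.color v ≠ 1 → 3 ≤ T.valence v) ∧ (T.color v = 1 → 2 ≤ T.valence v)

/-- The number `#Vert¹(Γ)` of colored vertices. -/
def ColoredTree.numColored {n : ℕ} (T : ColoredTree n) : ℕ :=
  (Finset.univ.filter fun v : T.V => T.color v = 1).card

theorem List.Nodup.length_le_one_of_forall_eq {α : Type*} {l : List α} {a : α} (hl : l.Nodup)
    (h : ∀ x ∈ l, x = a) : l.length ≤ 1 :=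
  List.nodup_replicate.1 (List.eq_replicate_iff.2 ⟨rfl, h⟩ ▸ hl)

namespace SimpleGraph

variable {V : Type*} {G : SimpleGraph V}

theorem Walk.start_eq_or_adj_of_support_eq {u v c : V} {l₀ l₂ : List V} (p : G.Walk u v)
    (h : p.support = l₀ ++ c :: l₂) (hl₀ : l₀.length ≤ 1) :
    u = c ∨ (u ∈ l₀ ∧ G.Adj u c) := by
  have hhead := p.cons_tail_support
  match l₀, hl₀ with
  | [], _ =>
    rw [h] at hhead
    exact Or.inl (List.cons.inj hhead).1
  | [x], _ =>
    rw [h] at hhead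
    obtain rfl : u = x := (List.cons.inj hhead).1
    have hchain := p.isChain_adj_support
    rw [h] at hchain
    exact Or.inr ⟨List.mem_singleton_self u, (List.isChain_cons_cons.1 hchain).1⟩

theorem Walk.end_eq_or_adj_of_support_eq {u v c : V} {l₀ l₂ : List V} (p : G.Walk u v)
    (h : p.support = l₀ ++ c :: l₂) (hl₂ : l₂.length ≤ 1) :
    v = c ∨ (v ∈ l₂ ∧ G.Adj c v) := by
  have := p.reverse.start_eq_or_adj_of_support_eq (c := c) (l₀ := l₂.reverse)
    (l₂ := l₀.reverse)
    (by simp [h]) (by simpa using hl₂)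
  simpa [G.adj_comm] using this

theorem Preconnected.eq_or_adj_of_forall_degree_eq_one [∀ v, Fintype (G.neighborSet v)]
    (hG : G.Preconnected) {w : V} (h : ∀ x, G.Adj w x → G.degree x = 1) (v : V) :
    v = w ∨ G.Adj w v := by
  classical
  obtain ⟨q⟩ := hG w v
  obtain ⟨p, hp⟩ := q.toPath
  cases p with
  | nil => exact Or.inl rfl
  | cons hx p =>
    cases p with
    | nil => exact Or.inr hx
    | cons hy p =>
      obtain ⟨z, -, hz⟩ := degree_eq_one_iff_existsUnique_adj.1 (h _ hx)
      have hyw : _ = w := (hz _ hy).trans (hz _ hx.symm).symm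
      have hw_notMem := (((Walk.cons_isPath_iff _ _).1 hp).2)
      simp only [Walk.support_cons, List.mem_cons, not_or] at hw_notMem
      exact absurd (hyw ▸ p.start_mem_support) hw_notMem.2

variable [Fintype V] [DecidableRel G.Adj]

theorem IsTree.sum_degree_add_two (hG : G.IsTree) :
    ∑ v, G.degree v + 2 = 2 * Fintype.card V := by
  rw [G.sum_degrees_eq_twice_card_edges, ← hG.card_edgeFinset]
  ring

theorem IsTree.neighborFinset_eq_and_degree_eq_one (hG : G.IsTree) {w : V} {S : Finset V}
    (hS : S ⊆ G.neighborFinset w) (hdeg : ∀ v, v ≠ w → v ∉ S → 2 ≤ G.degree v) :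
    G.neighborFinset w = S ∧ ∀ x ∈ S, G.degree x = 1 := by
  classical
  -- Off `w`, `f x ≥ 2`; but `∑ f = 2 #V - 2 + #S` and `f w = deg w ≥ #S`: all are equalities.
  let f : V → ℕ := fun x => G.degree x + if x ∈ S then 1 else 0
  have hwS : w ∉ S := fun hw => G.irrefl ((G.mem_neighborFinset w w).1 (hS hw))
  have hf : ∀ x ∈ univ.erase w, 2 ≤ f x := by
    intro x hx
    have hxw := (mem_erase.1 hx).1
    by_cases hxS : x ∈ S
    · have := (G.degree_pos_iff_exists_adj x).2
        ⟨w, ((G.mem_neighborFinset w x).1 (hS hxS)).symm⟩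
      simp only [f, hxS, if_true]
      omega
    · simpa [f, hxS] using hdeg x hxw hxS
  have hsum_f : f w + ∑ x ∈ univ.erase w, f x = ∑ x, G.degree x + #S := by
    rw [add_sum_erase _ _ (mem_univ w), sum_add_distrib, sum_boole,
      filter_mem_eq_inter, univ_inter, Nat.cast_id]
  have hfw : f w = G.degree w := by simp [f, hwS]
  have hSw : #S ≤ G.degree w := G.card_neighborFinset_eq_degree w ▸ card_le_card hS
  have hlow : ∑ x ∈ univ.erase w, 2 ≤ ∑ x ∈ univ.erase w, f x := sum_le_sum hf
  have hcard : ∑ x ∈ univ.erase w, 2 + 2 = 2 * Fintype.card V := by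
    rw [sum_const, card_erase_of_mem (mem_univ w), card_univ, smul_eq_mul]
    have := Fintype.card_pos_iff.2 ⟨w⟩
    omega
  have htree := hG.sum_degree_add_two
  refine ⟨(eq_of_subset_of_card_le hS (by rw [G.card_neighborFinset_eq_degree]; omega)).symm,
    fun x hxS => ?_⟩
  have hxw : x ≠ w := fun h => hwS (h ▸ hxS)
  have := (sum_eq_sum_iff_of_le hf).1 (by omega) x (mem_erase.2 ⟨hxw, mem_univ x⟩)
  simp only [f, hxS, if_true] at this
  omega

theorem IsTree.mem_of_subset_neighborFinset (hG : G.IsTree) {w : V} {S : Finset V}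
    (hS : S ⊆ G.neighborFinset w) (hdeg : ∀ v, v ≠ w → v ∉ S → 2 ≤ G.degree v) {v : V}
    (hv : v ≠ w) : v ∈ S := by
  obtain ⟨hN, hleaf⟩ := hG.neighborFinset_eq_and_degree_eq_one hS hdeg
  have hleaf' : ∀ x, G.Adj w x → G.degree x = 1 := fun x hx =>
    hleaf x (hN ▸ (G.mem_neighborFinset w x).2 hx)
  rcases hG.connected.preconnected.eq_or_adj_of_forall_degree_eq_one hleaf' v with h | h
  · exact absurd h hv
  · exact hN ▸ (G.mem_neighborFinset w v).2 h

end SimpleGraph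

namespace ColoredTree

variable {n : ℕ} (T : ColoredTree n)

def IsBubblingTree : Prop :=
  ∃ a b : T.V, a ≠ b ∧ (∀ v : T.V, v = a ∨ v = b) ∧ T.G.Adj a b ∧
    T.color a = 0 ∧ T.color b = 1 ∧ T.mark 0 = b ∧
    2 ≤ (Finset.univ.filter fun i : Fin n => T.mark i.succ = a).card

def IsScalingTree : Prop :=
  ∃ c : T.V, T.color c = 2 ∧ T.mark 0 = c ∧
    (∀ v : T.V, v ≠ c → T.G.Adj c v ∧ T.color v = 1 ∧
      ∃ i : Fin n, T.mark i.succ = v) ∧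
    (∀ i : Fin n, T.mark i.succ ≠ c) ∧
    3 ≤ Fintype.card T.V

theorem codim_eq_card_uncolored :
    (Fintype.card T.G.edgeSet : ℤ) + 1 - T.numColored = #{v | T.color v ≠ 1} := by
  have hE : Fintype.card T.G.edgeSet + 1 = Fintype.card T.V := by
    rw [← SimpleGraph.edgeFinset_card]
    exact T.isTree.card_edgeFinset
  have hV := card_filter_add_card_filter_not (s := univ) fun v => T.color v = 1
  rw [card_univ] at hV
  simp only [numColored, ne_eq]
  omega

theorem card_uncolored_eq_one_iff :
    #{v | T.color v ≠ 1} = 1 ↔ ∃ w, T.color w ≠ 1 ∧ ∀ v, T.color v ≠ 1 → v = w := by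
  simp [card_eq_one, eq_singleton_iff_unique_mem]

theorem card_filter_mark_eq (v : T.V) :
    #{i | T.mark i = v} = #{i : Fin n | T.mark i.succ = v} + if T.mark 0 = v then 1 else 0 := by
  rw [Fin.card_filter_univ_succ]
  split_ifs <;> rfl

theorem valence_eq_degree {v : T.V} (hv : ∀ i, T.mark i ≠ v) : T.valence v = T.G.degree v := by
  simp [valence, hv]

theorem sum_valence_add_two : ∑ v, T.valence v + 2 = 2 * Fintype.card T.V + (n + 1) := by
  have hmarks : ∑ v, #{i | T.mark i = v} = n + 1 := by
    simpa using (card_eq_sum_card_fiberwise (f := T.mark) (s := univ) (t := univ)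
      fun _ _ => mem_univ _).symm
  simp only [valence, sum_add_distrib, hmarks]
  linarith [T.isTree.sum_degree_add_two]

variable {T}

theorem IsStable.two_le_valence (hT : T.IsStable) (v : T.V) : 2 ≤ T.valence v := by
  by_cases hv : T.color v = 1
  · exact (hT v).2 hv
  · exact (Nat.le_succ 2).trans ((hT v).1 hv)

theorem IsStable.card_uncolored_lt (hT : T.IsStable) : #{v | T.color v ≠ 1} < n := by
  have hlow : ∑ v, (2 + if T.color v ≠ 1 then 1 else 0) ≤ ∑ v, T.valence v := by
    refine sum_le_sum fun v _ => ?_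
    split_ifs with hv
    · exact (hT v).1 hv
    · simpa using hT.two_le_valence v
  rw [sum_add_distrib, sum_const, sum_boole, card_univ, smul_eq_mul, Nat.cast_id] at hlow
  have := T.sum_valence_add_two
  omega

theorem exists_colored_on_path {w : T.V} (hw : ∀ v, T.color v ≠ 1 → v = w) (i : Fin n) :
    ∃ c, T.color c = 1 ∧
      (T.mark i.succ = c ∨ (T.mark i.succ = w ∧ T.color w = 0 ∧ T.G.Adj w c)) ∧
      (T.mark 0 = c ∨ (T.mark 0 = w ∧ T.color w = 2 ∧ T.G.Adj c w)) := by
  obtain ⟨q⟩ := T.isTree.connected.preconnected (T.mark i.succ) (T.mark 0)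
  obtain ⟨l₀, l₂, c, hsupp, hc, hl₀, hl₂⟩ := T.mono i q.toPath q.toPath.2
  have hnodup := q.toPath.2.support_nodup
  rw [hsupp, List.nodup_append, List.nodup_cons] at hnodup
  have hw₀ : ∀ x ∈ l₀, x = w := fun x hx => hw x (by simp [hl₀ x hx])
  have hw₂ : ∀ x ∈ l₂, x = w := fun x hx => hw x (by simp [hl₂ x hx])
  refine ⟨c, hc, ?_, ?_⟩
  · rcases SimpleGraph.Walk.start_eq_or_adj_of_support_eq _ hsupp
      (hnodup.1.length_le_one_of_forall_eq hw₀) with h | ⟨hmem, hadj⟩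
    · exact Or.inl h
    · have h := hw₀ _ hmem
      exact Or.inr ⟨h, h ▸ hl₀ _ hmem, h ▸ hadj⟩
  · rcases SimpleGraph.Walk.end_eq_or_adj_of_support_eq _ hsupp
      (hnodup.2.1.2.length_le_one_of_forall_eq hw₂) with h | ⟨hmem, hadj⟩
    · exact Or.inl h
    · have h := hw₂ _ hmem
      exact Or.inr ⟨h, h ▸ hl₂ _ hmem, h ▸ hadj⟩

theorem IsStable.adj_root_of_forall_input (hT : T.IsStable)
    (h : ∀ i : Fin n, T.mark i.succ = T.mark 0 ∨ T.G.Adj (T.mark 0) (T.mark i.succ))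
    (v : T.V) (hv : v ≠ T.mark 0) :
    T.G.Adj (T.mark 0) v ∧ ∃ i : Fin n, T.mark i.succ = v := by
  let S : Finset T.V := {x | x ≠ T.mark 0 ∧ ∃ i : Fin n, T.mark i.succ = x}
  have hS : S ⊆ T.G.neighborFinset (T.mark 0) := by
    intro x hx
    obtain ⟨hx0, i, rfl⟩ := (mem_filter.1 hx).2
    exact (T.G.mem_neighborFinset _ _).2 ((h i).resolve_left hx0)
  have hdeg : ∀ x, x ≠ T.mark 0 → x ∉ S → 2 ≤ T.G.degree x := by
    intro x hx0 hxS
    have hmark : ∀ i, T.mark i ≠ x := by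
      refine Fin.cases (Ne.symm hx0) fun i hi => hxS ?_
      exact mem_filter.2 ⟨mem_univ _, hx0, i, hi⟩
    exact T.valence_eq_degree hmark ▸ hT.two_le_valence x
  have hvS := T.isTree.mem_of_subset_neighborFinset hS hdeg hv
  exact ⟨(T.G.mem_neighborFinset _ _).1 (hS hvS), (mem_filter.1 hvS).2.2⟩

theorem IsStable.isBubblingTree (hT : T.IsStable) {w : T.V}
    (hw : ∀ v, T.color v ≠ 1 → v = w) (hw₀ : T.color w = 0) : T.IsBubblingTree := by
  have hinput : ∀ i : Fin n, T.color (T.mark 0) = 1 ∧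
      (T.mark i.succ = T.mark 0 ∨ (T.mark i.succ = w ∧ T.G.Adj w (T.mark 0))) := by
    intro i
    obtain ⟨c, hc, hstart, hend⟩ := exists_colored_on_path hw i
    obtain rfl : T.mark 0 = c := hend.resolve_right fun h => by simp [hw₀] at h
    exact ⟨hc, hstart.imp_right fun h => ⟨h.1, h.2.2⟩⟩
  have hn : 0 < n := by
    have := hT.card_uncolored_lt
    have : 0 < #{v | T.color v ≠ 1} := card_pos.2 ⟨w, by simp [hw₀]⟩
    omega
  have hroot : T.color (T.mark 0) = 1 := (hinput ⟨0, hn⟩).1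
  have hw_ne : w ≠ T.mark 0 := by rintro rfl; simp [hroot] at hw₀
  have hstar := hT.adj_root_of_forall_input fun i =>
    (hinput i).2.imp_right fun (h : T.mark i.succ = w ∧ _) => h.1 ▸ h.2.symm
  have hall : ∀ v, v = w ∨ v = T.mark 0 := by
    intro v
    by_cases hv : v = T.mark 0
    · exact Or.inr hv
    · obtain ⟨-, i, rfl⟩ := hstar v hv
      exact Or.inl ((hinput i).2.resolve_left hv).1
  have hdeg : T.G.degree w ≤ 1 := by
    rw [← T.G.card_neighborFinset_eq_degree]
    refine card_le_one.2 fun x hx y hy => ?_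
    rw [SimpleGraph.mem_neighborFinset] at hx hy
    rw [(hall x).resolve_left (T.G.ne_of_adj hx).symm,
      (hall y).resolve_left (T.G.ne_of_adj hy).symm]
  have hval := (hT w).1 (by simp [hw₀])
  rw [valence, card_filter_mark_eq, if_neg hw_ne.symm] at hval
  exact ⟨w, T.mark 0, hw_ne, hall, (hstar w hw_ne).1.symm, hw₀, hroot, rfl, by omega⟩

theorem IsStable.isScalingTree (hT : T.IsStable) {w : T.V}
    (hw : ∀ v, T.color v ≠ 1 → v = w) (hw₂ : T.color w = 2) : T.IsScalingTree := by
  have hinput : ∀ i : Fin n, T.color (T.mark i.succ) = 1 ∧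
      (T.mark 0 = T.mark i.succ ∨ (T.mark 0 = w ∧ T.G.Adj (T.mark i.succ) w)) := by
    intro i
    obtain ⟨c, hc, hstart, hend⟩ := exists_colored_on_path hw i
    obtain rfl : T.mark i.succ = c := hstart.resolve_right fun h => by simp [hw₂] at h
    exact ⟨hc, hend.imp_right fun h => ⟨h.1, h.2.2⟩⟩
  have hinput_ne : ∀ i : Fin n, T.mark i.succ ≠ w := fun i h => by
    simpa [h, hw₂] using (hinput i).1
  -- Otherwise every mark sits at the root, so `adj_root_of_forall_input` puts an input at `w`.
  obtain rfl : T.mark 0 = w := by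
    by_contra hroot
    obtain ⟨-, i, hi⟩ := hT.adj_root_of_forall_input
      (fun i => Or.inl ((hinput i).2.resolve_right fun h => hroot h.1).symm) w (Ne.symm hroot)
    exact hinput_ne i hi
  have hstar := hT.adj_root_of_forall_input fun i => Or.inr <|
    ((hinput i).2.resolve_left fun h => hinput_ne i h.symm).2.symm
  have hval := (hT (T.mark 0)).1 (by simp [hw₂])
  rw [valence, card_filter_mark_eq, if_pos rfl,
    filter_false_of_mem fun i _ => hinput_ne i, card_empty] at hval
  refine ⟨T.mark 0, hw₂, rfl, fun v hv => ⟨(hstar v hv).1, ?_, (hstar v hv).2⟩,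
    hinput_ne, ?_⟩
  · by_contra h
    exact hv (hw v h)
  · have := T.G.degree_lt_card_verts (T.mark 0)
    omega

end ColoredTree

/-- Classification of the stable colored trees `Γ` with `n` inputs of codimension one,
i.e. with `#Edge_{<∞}(Γ) + 1 − #Vert¹(Γ) = 1`.  They are exactly:
(a) for a subset `I ⊆ {1,…,n}` with `|I| ≥ 2`, the tree with two vertices `a, b` joined
by one finite edge, `a ∈ Vert⁰` carrying the inputs labelled by `I`, `b ∈ Vert¹`
carrying the root edge and the remaining inputs; and
(b) for an unordered partition of `{1,…,n}` into `r ≥ 2` nonempty parts, the tree with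
one vertex `c ∈ Vert^∞` carrying the root edge joined by finite edges to `r` colored
vertices, the `j`-th of which carries the inputs labelled by the `j`-th part. -/
theorem stableColoredTree_codim_one_classification {n : ℕ}
    (T : ColoredTree n) (hT : T.IsStable) :
    (Fintype.card T.G.edgeSet : ℤ) + 1 - T.numColored = 1 ↔
      -- case (a): bubbling points, divisor D_I
      ((∃ a b : T.V, a ≠ b ∧ (∀ v : T.V, v = a ∨ v = b) ∧ T.G.Adj a b ∧
          T.color a = 0 ∧ T.color b = 1 ∧ T.mark 0 = b ∧
          2 ≤ (Finset.univ.filter fun i : Fin n => T.mark i.succ = a).card) ∨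
      -- case (b): blowing up the scaling, divisor D_{[I₁,…,I_r]}
        (∃ c : T.V, T.color c = 2 ∧ T.mark 0 = c ∧
          (∀ v : T.V, v ≠ c → T.G.Adj c v ∧ T.color v = 1 ∧
            ∃ i : Fin n, T.mark i.succ = v) ∧
          (∀ i : Fin n, T.mark i.succ ≠ c) ∧
          3 ≤ Fintype.card T.V)) := by
  change _ ↔ T.IsBubblingTree ∨ T.IsScalingTree
  rw [T.codim_eq_card_uncolored, Nat.cast_eq_one, T.card_uncolored_eq_one_iff]
  constructor
  · rintro ⟨w, hw₁, hw⟩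
    have hw_color : T.color w = 0 ∨ T.color w = 2 := by omega
    rcases hw_color with hw₀ | hw₂
    · exact Or.inl (hT.isBubblingTree hw hw₀)
    · exact Or.inr (hT.isScalingTree hw hw₂)
  · rintro (⟨a, b, -, hab, -, ha, hb, -⟩ | ⟨c, hc, -, hcolored, -⟩)
    · refine ⟨a, by simp [ha], fun v hv => (hab v).resolve_right ?_⟩
      rintro rfl
      exact hv hb
    · exact ⟨c, by simp [hc], fun v hv => by_contra fun hvc => hv (hcolored v hvc).2.1⟩
end

section
/- Let Γ be a stable colored tree with n ≥ 1 inputs. Then #Edge_{<∞}(Γ) + 1 − #Vert¹(Γ) ≥ 0, with equality if and only if Γ consists of a single vertex, which is colored (lies in Vert¹(Γ)) and carries the root edge and all n inputs. -/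
open Finset

/-!
Since `Γ` is a tree, `#Edge_{<∞}(Γ) + 1 = #Vert(Γ)`, so the codimension is the number of
uncolored vertices; this is nonnegative and vanishes exactly when every vertex is colored.
If every vertex is colored, monotonicity forces each input path to consist of a single
vertex, so all semi-infinite edges sit at the root vertex. Every other vertex then has
valence equal to its degree, which stability makes at least `2`; but a tree with more than
one vertex has two leaves, one of which avoids the root vertex.
-/

namespace SimpleGraph

lemma IsTree.subsingleton_of_two_le_degree {V : Type*} {G : SimpleGraph V} [Finite G.edgeSet]
    [G.LocallyFinite] (hG : G.IsTree) (v₀ : V) (hdeg : ∀ w, w ≠ v₀ → 2 ≤ G.degree w) :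
    Subsingleton V := by
  by_contra hV
  have : Nontrivial V := not_subsingleton_iff_nontrivial.1 hV
  obtain ⟨u, v, huv, hu, hv⟩ := hG.exists_ne_and_degree_eq_one
  by_cases hu₀ : u = v₀
  · have := hdeg v (fun h => huv (hu₀.trans h.symm)); omega
  · have := hdeg u hu₀; omega

end SimpleGraph

namespace ColoredTree

variable {n : ℕ} (T : ColoredTree n)

lemma card_edgeSet_add_one : Fintype.card T.G.edgeSet + 1 = Fintype.card T.V := by
  rw [← SimpleGraph.edgeFinset_card]
  exact T.isTree.card_edgeFinset

lemma numColored_le_card : T.numColored ≤ Fintype.card T.V :=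
  card_filter_le _ _

lemma numColored_eq_card_iff : T.numColored = Fintype.card T.V ↔ ∀ v, T.color v = 1 := by
  simp [numColored, ← card_univ, card_filter_eq_iff]

variable {T}

lemma mark_eq_mark_zero_of_forall_color_eq_one (hall : ∀ v, T.color v = 1) (i : Fin (n + 1)) :
    T.mark i = T.mark 0 := by
  induction i using Fin.cases with
  | zero => rfl
  | succ j =>
    obtain ⟨p, hp⟩ := T.isTree.connected.exists_isPath (T.mark j.succ) (T.mark 0)
    obtain ⟨l₀, l₂, c, hsupp, -, h₀, h₂⟩ := T.mono j p hp
    have hl₀ : l₀ = [] :=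
      List.eq_nil_iff_forall_not_mem.2 fun x hx => by simpa [hall x] using h₀ x hx
    have hl₂ : l₂ = [] :=
      List.eq_nil_iff_forall_not_mem.2 fun x hx => by simpa [hall x] using h₂ x hx
    have hlen : p.length = 0 := by simpa [hsupp, hl₀, hl₂] using p.length_support
    exact p.eq_of_length_eq_zero hlen

lemma two_le_degree_of_forall_color_eq_one (hT : T.IsStable) (hall : ∀ v, T.color v = 1)
    (w : T.V) (hw : w ≠ T.mark 0) : 2 ≤ T.G.degree w := by
  have hnone : (univ.filter fun i => T.mark i = w) = ∅ :=
    filter_false_of_mem fun i _ => by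
      rw [mark_eq_mark_zero_of_forall_color_eq_one hall i]
      exact hw.symm
  simpa [valence, hnone] using (hT w).2 (hall w)

lemma card_eq_one_of_forall_color_eq_one (hT : T.IsStable) (hall : ∀ v, T.color v = 1) :
    Fintype.card T.V = 1 := by
  have hsub := T.isTree.subsingleton_of_two_le_degree (T.mark 0)
    (two_le_degree_of_forall_color_eq_one hT hall)
  exact le_antisymm (Fintype.card_le_one_iff_subsingleton.2 hsub)
    (Fintype.card_pos_iff.2 ⟨T.mark 0⟩)

end ColoredTree

theorem stableColoredTree_codim_nonneg_general {n : ℕ}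
    (T : ColoredTree n) (hT : T.IsStable) :
    0 ≤ (Fintype.card T.G.edgeSet : ℤ) + 1 - T.numColored ∧
      ((Fintype.card T.G.edgeSet : ℤ) + 1 - T.numColored = 0 ↔
        Fintype.card T.V = 1 ∧ (∀ v : T.V, T.color v = 1) ∧
          ∀ i : Fin (n + 1), T.mark i = T.mark 0) := by
  have hedges := T.card_edgeSet_add_one
  have hle := T.numColored_le_card
  refine ⟨by omega, fun hzero => ?_, fun ⟨_, hall, _⟩ => ?_⟩
  · have hall := T.numColored_eq_card_iff.1 (by omega)
    exact ⟨ColoredTree.card_eq_one_of_forall_color_eq_one hT hall, hall,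
      ColoredTree.mark_eq_mark_zero_of_forall_color_eq_one hall⟩
  · have hcard := T.numColored_eq_card_iff.2 hall
    omega

/-- For a stable colored tree `Γ` with `n ≥ 1` inputs, the codimension
`#Edge_{<∞}(Γ) + 1 − #Vert¹(Γ)` is nonnegative, and it vanishes if and only if `Γ`
consists of a single vertex, which is colored and carries the root edge and all `n`
inputs. -/
theorem stableColoredTree_codim_nonneg {n : ℕ} (hn : 1 ≤ n)
    (T : ColoredTree n) (hT : T.IsStable) :
    0 ≤ (Fintype.card T.G.edgeSet : ℤ) + 1 - T.numColored ∧
      ((Fintype.card T.G.edgeSet : ℤ) + 1 - T.numColored = 0 ↔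
        Fintype.card T.V = 1 ∧ (∀ v : T.V, T.color v = 1) ∧
          ∀ i : Fin (n + 1), T.mark i = T.mark 0) :=
  stableColoredTree_codim_nonneg_general T hT
end
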